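/- Let ((A_p)_{p∈G}, (Δ_{p,q}), ε, (S_p)) be a finite-type Hopf G-coalgebra over a field k. Then there exists f ∈ (A_e)* such that the family (φ_f^p)_{p∈G} is nonzero, i.e. φ_f^p ≠ 0 for some p ∈ G. -/

import Mathlib

set_option linter.unusedSectionVars false
set_option synthInstance.maxHeartbeats 1000000
set_option maxHeartbeats 1600000


open TensorProduct

universe u v w

variable (k : Type u) [Field k] {G : Type v} [Group G]

/-- Transport of elements along an equality of indices. -/
def castL (A : G → Type w) [∀ p, Ring (A p)] [∀ p, Algebra k (A p)]
    {p q : G} (h : p = q) : A p →ₗ[k] A q := by subst h; exact LinearMap.id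

/-- A (finite-type) Hopf `G`-coalgebra: a family of unital `k`-algebras `(A p)`,
comultiplications `Δ p q : A (p*q) → A p ⊗ A q` which are unital algebra maps and
coassociative, a counit `ε : A 1 → k`, and antipode maps `S p : A p → A p⁻¹`. -/
structure HopfGCoalgebra (A : G → Type w) [∀ p, Ring (A p)] [∀ p, Algebra k (A p)] where
  Δ : ∀ p q : G, A (p * q) →ₐ[k] (A p ⊗[k] A q)
  coassoc : ∀ (p q r : G) (a : A (p * q * r)),
    (Algebra.TensorProduct.assoc k k k (A p) (A q) (A r))
        ((Algebra.TensorProduct.map (Δ p q) (AlgHom.id k (A r))) ((Δ (p * q) r) a))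
      = (Algebra.TensorProduct.map (AlgHom.id k (A p)) (Δ q r))
          ((Δ p (q * r)) (castL k A (mul_assoc p q r) a))
  ε : A (1 : G) →ₐ[k] k
  counit_right : ∀ (p : G) (a : A (p * 1)),
    (TensorProduct.rid k (A p))
        (TensorProduct.map LinearMap.id ε.toLinearMap ((Δ p 1) a))
      = castL k A (mul_one p) a
  counit_left : ∀ (p : G) (a : A (1 * p)),
    (TensorProduct.lid k (A p))
        (TensorProduct.map ε.toLinearMap LinearMap.id ((Δ 1 p) a))
      = castL k A (one_mul p) a
  S : ∀ p : G, A p →ₗ[k] A p⁻¹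
  antipode_left : ∀ (p : G) (a : A (p⁻¹ * p)),
    LinearMap.mul' k (A p)
        (TensorProduct.map ((castL k A (inv_inv p)).comp (S p⁻¹)) LinearMap.id
          ((Δ p⁻¹ p) a))
      = ε (castL k A (inv_mul_cancel p) a) • 1
  antipode_right : ∀ (p : G) (a : A (p * p⁻¹)),
    LinearMap.mul' k (A p)
        (TensorProduct.map LinearMap.id ((castL k A (inv_inv p)).comp (S p⁻¹))
          ((Δ p p⁻¹) a))
      = ε (castL k A (mul_inv_cancel p) a) • 1

/-- A left integral on a Hopf `G`-coalgebra: a family of functionals `φ p : A p → k`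
with `(id ⊗ φ q)(Δ p q a) = φ (pq) a • 1` in `A p`. -/
def HopfGCoalgebra.IsLeftIntegral
    {k : Type u} [Field k] {G : Type v} [Group G]
    {A : G → Type w} [∀ p, Ring (A p)] [∀ p, Algebra k (A p)]
    (H : HopfGCoalgebra k A) (φ : ∀ p : G, A p →ₗ[k] k) : Prop :=
  ∀ (p q : G) (a : A (p * q)),
    (TensorProduct.rid k (A p))
        (TensorProduct.map LinearMap.id (φ q) ((H.Δ p q) a))
      = φ (p * q) a • 1

/-- The pairing `f·g := (f ⊗ g) ∘ Δ_{p,q}` of linear functionals on the components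
of a Hopf `G`-coalgebra. -/
noncomputable def HopfGCoalgebra.dmul
    {k : Type u} [Field k] {G : Type v} [Group G]
    {A : G → Type w} [∀ p, Ring (A p)] [∀ p, Algebra k (A p)]
    (H : HopfGCoalgebra k A) {p q : G}
    (f : A p →ₗ[k] k) (g : A q →ₗ[k] k) : A (p * q) →ₗ[k] k :=
  LinearMap.mul' k k ∘ₗ TensorProduct.map f g ∘ₗ (H.Δ p q).toLinearMap

/-- For `f ∈ (A e)*`, the functional `φ_f^p : A p → k` given by
`φ_f^p(a) = Tr (x ↦ ((id ⊗ f) ∘ Δ_{p,e}) (a · S_{p⁻¹}(S_p x)))`. -/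
noncomputable def HopfGCoalgebra.phi
    {k : Type u} [Field k] {G : Type v} [Group G]
    {A : G → Type w} [∀ p, Ring (A p)] [∀ p, Algebra k (A p)]
    (H : HopfGCoalgebra k A) (f : A (1 : G) →ₗ[k] k) (p : G) : A p →ₗ[k] k :=
  (LinearMap.trace k (A p)) ∘ₗ
    (LinearMap.llcomp k (A p) (A p) (A p)
        ((TensorProduct.rid k (A p)).toLinearMap ∘ₗ
          TensorProduct.map LinearMap.id f ∘ₗ
          (H.Δ p 1).toLinearMap ∘ₗ castL k A (mul_one p).symm)) ∘ₗ
    (LinearMap.lcomp k (A p) (castL k A (inv_inv p) ∘ₗ (H.S p⁻¹) ∘ₗ H.S p)) ∘ₗ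
    (LinearMap.mul k (A p))

section Aux
variable {k : Type u} [Field k] {G : Type v} [Group G]
  {A : G → Type w} [∀ p, Ring (A p)] [∀ p, Algebra k (A p)]

lemma castL_id {p : G} (h : p = p) : castL k A h = LinearMap.id := rfl

lemma castL_castL {p q r : G} (h : p = q) (h' : q = r) (x : A p) :
    castL k A h' (castL k A h x) = castL k A (h.trans h') x := by
  subst h; subst h'; rfl

lemma castL_mul {p q : G} (h : p = q) (x y : A p) :
    castL k A h (x * y) = castL k A h x * castL k A h y := by subst h; rfl

lemma castL_one {p q : G} (h : p = q) : castL k A h (1 : A p) = 1 := by subst h; rfl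

lemma castL_smul {p q : G} (h : p = q) (c : k) (x : A p) :
    castL k A h (c • x) = c • castL k A h x := by subst h; rfl

lemma algMap_eq {B C B' C' : Type*} [Ring B] [Ring C] [Ring B'] [Ring C']
    [Algebra k B] [Algebra k C] [Algebra k B'] [Algebra k C']
    (f : B →ₐ[k] B') (g : C →ₐ[k] C') (t : B ⊗[k] C) :
    Algebra.TensorProduct.map f g t = TensorProduct.map f.toLinearMap g.toLinearMap t := by
  induction t with
  | zero => simp
  | tmul x y => simp
  | add x y hx hy => simp [hx, hy]

lemma algAssoc_eq {B C E : Type*} [Ring B] [Ring C] [Ring E]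
    [Algebra k B] [Algebra k C] [Algebra k E] (t : (B ⊗[k] C) ⊗[k] E) :
    Algebra.TensorProduct.assoc k k k B C E t = TensorProduct.assoc k B C E t := rfl

namespace HopfGCoalgebra

variable (H : HopfGCoalgebra k A)

lemma Δ_cast {p q p' q' : G} (hp : p' = p) (hq : q' = q) (hpq : p' * q' = p * q)
    (x : A (p' * q')) :
    H.Δ p q (castL k A hpq x)
      = TensorProduct.map (castL k A hp) (castL k A hq) (H.Δ p' q' x) := by
  subst hp; subst hq
  rw [castL_id, castL_id, castL_id, TensorProduct.map_id]
  rfl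

lemma S_cast {p q : G} (h : p = q) (h' : p⁻¹ = q⁻¹) (x : A p) :
    H.S q (castL k A h x) = castL k A h' (H.S p x) := by
  subst h; rw [castL_id, castL_id]; rfl

/-- comultiplication on `A 1`. -/
noncomputable def D1 : A (1:G) →ₗ[k] A (1:G) ⊗[k] A (1:G) :=
  (H.Δ 1 1).toLinearMap ∘ₗ castL k A (mul_one (1:G)).symm

lemma D1_def : H.D1 = (H.Δ 1 1).toLinearMap ∘ₗ castL k A (mul_one (1:G)).symm := rfl

/-- the antipode of `A 1` (transported from `S 1⁻¹`). -/
noncomputable def sA : A (1:G) →ₗ[k] A (1:G) :=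
  (castL k A (inv_inv (1:G)) ∘ₗ H.S (1:G)⁻¹) ∘ₗ castL k A (inv_one : (1:G)⁻¹ = 1).symm

/-- the transported `S 1`. -/
noncomputable def sB : A (1:G) →ₗ[k] A (1:G) :=
  castL k A (inv_one : (1:G)⁻¹ = 1) ∘ₗ H.S 1

/-- the `S²`-type map appearing in `phi` at `p = 1`. -/
noncomputable def Tmap : A (1:G) →ₗ[k] A (1:G) :=
  castL k A (inv_inv (1:G)) ∘ₗ H.S (1:G)⁻¹ ∘ₗ H.S 1

lemma Tmap_eq (x : A (1:G)) : H.Tmap x = H.sA (H.sB x) := by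
  simp only [Tmap, sA, sB, LinearMap.comp_apply, castL_castL, castL_id, LinearMap.id_apply]


lemma AXR (x : A (1:G)) :
    (TensorProduct.rid k (A 1))
      (TensorProduct.map LinearMap.id H.ε.toLinearMap (H.D1 x)) = x := by
  have h := H.counit_right 1 (castL k A (mul_one (1:G)).symm x)
  rw [castL_castL, castL_id] at h
  simpa only [D1, LinearMap.comp_apply, AlgHom.toLinearMap_apply, LinearMap.id_apply] using h

lemma AXL (x : A (1:G)) :
    (TensorProduct.lid k (A 1))
      (TensorProduct.map H.ε.toLinearMap LinearMap.id (H.D1 x)) = x := by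
  have h := H.counit_left 1 (castL k A (mul_one (1:G)).symm x)
  rw [castL_castL, castL_id] at h
  simpa only [D1, LinearMap.comp_apply, AlgHom.toLinearMap_apply, LinearMap.id_apply] using h

lemma D1_mul (x y : A (1:G)) : H.D1 (x * y) = H.D1 x * H.D1 y := by
  simp only [D1, LinearMap.comp_apply, AlgHom.toLinearMap_apply, castL_mul, map_mul]

lemma D1_one : H.D1 (1 : A (1:G)) = 1 := by
  simp only [D1, LinearMap.comp_apply, AlgHom.toLinearMap_apply, castL_one, map_one]

lemma COA (x : A (1:G)) :
    (TensorProduct.assoc k (A 1) (A 1) (A 1))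
        ((TensorProduct.map H.D1 LinearMap.id) (H.D1 x)) =
      (TensorProduct.map LinearMap.id H.D1) (H.D1 x) := by
  have h3 : (1:G) * 1 = 1 * 1 * 1 := by simp
  have h := H.coassoc 1 1 1 (castL k A h3 (castL k A (mul_one (1:G)).symm x))
  rw [H.Δ_cast (mul_one (1:G)).symm rfl h3, castL_castL,
    H.Δ_cast rfl (mul_one (1:G)).symm (h3.trans (mul_assoc 1 1 1))] at h
  rw [algAssoc_eq, algMap_eq, algMap_eq] at h
  rw [← LinearMap.comp_apply (TensorProduct.map _ _), ← TensorProduct.map_comp] at h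
  rw [← LinearMap.comp_apply (TensorProduct.map (AlgHom.toLinearMap _) _),
    ← TensorProduct.map_comp] at h
  simpa only [D1, castL_id, AlgHom.toLinearMap_id, LinearMap.comp_id, LinearMap.id_comp,
    LinearMap.comp_apply, AlgHom.toLinearMap_apply] using h


lemma castL_comp {p q r : G} (h : p = q) (h' : q = r) :
    castL k A h' ∘ₗ castL k A h = castL k A (h.trans h') := by
  subst h; subst h'; rfl

lemma S_cast_comp {p q : G} (h : p = q) (h' : p⁻¹ = q⁻¹) :
    H.S q ∘ₗ castL k A h = castL k A h' ∘ₗ H.S p := by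
  subst h; rw [castL_id, castL_id]; rfl

lemma castL_mul' {p q : G} (h : p = q) (t : A p ⊗[k] A p) :
    castL k A h (LinearMap.mul' k (A p) t)
      = LinearMap.mul' k (A q) (TensorProduct.map (castL k A h) (castL k A h) t) := by
  subst h; rw [castL_id, TensorProduct.map_id]; rfl

lemma SLax (x : A (1:G)) :
    LinearMap.mul' k (A 1) (TensorProduct.map H.sA LinearMap.id (H.D1 x)) = H.ε x • 1 := by
  have h5 : (1:G) * 1 = 1⁻¹ * 1 := by simp
  have h := H.antipode_left 1 (castL k A h5 (castL k A (mul_one (1:G)).symm x))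
  rw [H.Δ_cast (inv_one : (1:G)⁻¹ = 1).symm rfl h5] at h
  rw [← LinearMap.comp_apply (TensorProduct.map _ _), ← TensorProduct.map_comp] at h
  rw [castL_castL, castL_castL, castL_id] at h
  simpa only [sA, D1, castL_id, LinearMap.comp_id, LinearMap.id_comp,
    LinearMap.comp_apply, AlgHom.toLinearMap_apply, LinearMap.id_apply] using h

lemma SRax (x : A (1:G)) :
    LinearMap.mul' k (A 1) (TensorProduct.map LinearMap.id H.sA (H.D1 x)) = H.ε x • 1 := by
  have h6 : (1:G) * 1 = 1 * 1⁻¹ := by simp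
  have h := H.antipode_right 1 (castL k A h6 (castL k A (mul_one (1:G)).symm x))
  rw [H.Δ_cast rfl (inv_one : (1:G)⁻¹ = 1).symm h6] at h
  rw [← LinearMap.comp_apply (TensorProduct.map _ _), ← TensorProduct.map_comp] at h
  rw [castL_castL, castL_castL, castL_id] at h
  simpa only [sA, D1, castL_id, LinearMap.comp_id, LinearMap.id_comp,
    LinearMap.comp_apply, AlgHom.toLinearMap_apply, LinearMap.id_apply] using h

lemma SBax (x : A (1:G)) :
    LinearMap.mul' k (A 1) (TensorProduct.map H.sB LinearMap.id (H.D1 x)) = H.ε x • 1 := by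
  have h7 : (1:G) * 1 = (1:G)⁻¹⁻¹ * (1:G)⁻¹ := by simp
  have h := H.antipode_left (1:G)⁻¹ (castL k A h7 (castL k A (mul_one (1:G)).symm x))
  rw [H.Δ_cast (inv_inv (1:G)).symm (inv_one : (1:G)⁻¹ = 1).symm h7] at h
  rw [← LinearMap.comp_apply (TensorProduct.map _ _), ← TensorProduct.map_comp] at h
  rw [castL_castL, castL_castL, castL_id, LinearMap.id_apply] at h
  have h2 := congrArg (castL k A (inv_one : (1:G)⁻¹ = 1)) h
  rw [castL_mul' (inv_one : (1:G)⁻¹ = 1), castL_smul, castL_one] at h2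
  rw [← LinearMap.comp_apply (TensorProduct.map _ _), ← TensorProduct.map_comp] at h2
  have hF : castL k A (inv_one : (1:G)⁻¹ = 1) ∘ₗ
      (((castL k A (inv_inv ((1:G)⁻¹))).comp (H.S ((1:G)⁻¹)⁻¹)) ∘ₗ
        castL k A (inv_inv (1:G)).symm) = H.sB := by
    apply LinearMap.ext; intro z
    simp only [LinearMap.comp_apply, LinearMap.coe_comp, Function.comp_apply]
    rw [H.S_cast (inv_inv (1:G)).symm (congrArg Inv.inv (inv_inv (1:G)).symm)]
    rw [castL_castL, castL_castL]
    rfl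
  have hG : castL k A (inv_one : (1:G)⁻¹ = 1) ∘ₗ
      ((LinearMap.id : A ((1:G)⁻¹) →ₗ[k] A ((1:G)⁻¹)) ∘ₗ
        castL k A (inv_one : (1:G)⁻¹ = 1).symm) = (LinearMap.id : A (1:G) →ₗ[k] A (1:G)) := by
    apply LinearMap.ext; intro z
    simp only [LinearMap.comp_apply, LinearMap.id_apply, castL_castL, castL_id]
  rw [hF, hG] at h2
  simpa only [D1, LinearMap.comp_apply, AlgHom.toLinearMap_apply] using h2


/-! ### the Hopf algebra `A 1`: convolution development -/

noncomputable def epsm : A (1:G) →ₗ[k] A (1:G) := H.ε.toLinearMap.smulRight 1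

lemma epsm_apply (x : A (1:G)) : H.epsm x = H.ε x • 1 := rfl

lemma SL_comp : LinearMap.mul' k (A 1) ∘ₗ TensorProduct.map H.sA LinearMap.id ∘ₗ H.D1
    = H.epsm := LinearMap.ext fun x => H.SLax x

lemma SR_comp : LinearMap.mul' k (A 1) ∘ₗ TensorProduct.map LinearMap.id H.sA ∘ₗ H.D1
    = H.epsm := LinearMap.ext fun x => H.SRax x

lemma SB_comp : LinearMap.mul' k (A 1) ∘ₗ TensorProduct.map H.sB LinearMap.id ∘ₗ H.D1
    = H.epsm := LinearMap.ext fun x => H.SBax x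

noncomputable def Delta2 :
    (A (1:G) ⊗[k] A (1:G)) →ₗ[k] ((A (1:G) ⊗[k] A (1:G)) ⊗[k] (A (1:G) ⊗[k] A (1:G))) :=
  (TensorProduct.tensorTensorTensorComm k (A (1:G)) (A (1:G)) (A (1:G)) (A (1:G))).toLinearMap
    ∘ₗ TensorProduct.map H.D1 H.D1

noncomputable def epsV : (A (1:G) ⊗[k] A (1:G)) →ₗ[k] k :=
  LinearMap.mul' k k ∘ₗ TensorProduct.map H.ε.toLinearMap H.ε.toLinearMap

noncomputable def uu : (A (1:G) ⊗[k] A (1:G)) →ₗ[k] A (1:G) := H.epsV.smulRight 1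

noncomputable def conv (Fm Gm : (A (1:G) ⊗[k] A (1:G)) →ₗ[k] A (1:G)) :
    (A (1:G) ⊗[k] A (1:G)) →ₗ[k] A (1:G) :=
  LinearMap.mul' k (A 1) ∘ₗ TensorProduct.map Fm Gm ∘ₗ H.Delta2

lemma tensor_mul (t u : A (1:G) ⊗[k] A (1:G)) :
    TensorProduct.map (LinearMap.mul' k (A 1)) (LinearMap.mul' k (A 1))
      ((TensorProduct.tensorTensorTensorComm k (A (1:G)) (A (1:G)) (A (1:G)) (A (1:G)))
        (t ⊗ₜ u)) = t * u := by
  induction t using TensorProduct.induction_on with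
  | zero => simp
  | add t1 t2 h1 h2 => simp only [add_tmul, map_add, h1, h2, add_mul]
  | tmul x y =>
    induction u using TensorProduct.induction_on with
    | zero => simp
    | add u1 u2 h1 h2 => simp only [tmul_add, map_add, h1, h2, mul_add]
    | tmul z w =>
      simp only [tensorTensorTensorComm_tmul, TensorProduct.map_tmul, LinearMap.mul'_apply,
        Algebra.TensorProduct.tmul_mul_tmul]

lemma DM_comp : H.D1 ∘ₗ LinearMap.mul' k (A 1)
    = TensorProduct.map (LinearMap.mul' k (A 1)) (LinearMap.mul' k (A 1)) ∘ₗ H.Delta2 := by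
  apply TensorProduct.ext'
  intro x y
  simp only [Delta2, LinearMap.comp_apply, LinearMap.mul'_apply, TensorProduct.map_tmul,
    LinearEquiv.coe_coe, H.D1_mul, tensor_mul]

lemma epsm_mul : H.epsm ∘ₗ LinearMap.mul' k (A 1) = H.uu := by
  apply TensorProduct.ext'
  intro x y
  simp only [uu, epsV, epsm, LinearMap.comp_apply, LinearMap.mul'_apply,
    LinearMap.smulRight_apply, TensorProduct.map_tmul, AlgHom.toLinearMap_apply, map_mul]

lemma mu_assoc : LinearMap.mul' k (A 1) ∘ₗ
      TensorProduct.map (LinearMap.mul' k (A 1)) LinearMap.id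
    = LinearMap.mul' k (A 1) ∘ₗ TensorProduct.map LinearMap.id (LinearMap.mul' k (A 1))
        ∘ₗ (TensorProduct.assoc k (A (1:G)) (A (1:G)) (A (1:G))).toLinearMap := by
  apply TensorProduct.ext_threefold
  intro x y z
  simp [mul_assoc]

lemma natA :
    TensorProduct.map (TensorProduct.map H.D1 H.D1)
        (LinearMap.id : (A (1:G) ⊗[k] A (1:G)) →ₗ[k] (A (1:G) ⊗[k] A (1:G)))
      ∘ₗ (TensorProduct.tensorTensorTensorComm k (A (1:G)) (A (1:G)) (A (1:G)) (A (1:G))).toLinearMap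
    = (TensorProduct.tensorTensorTensorComm k (A (1:G) ⊗[k] A (1:G)) (A (1:G))
        (A (1:G) ⊗[k] A (1:G)) (A (1:G))).toLinearMap
      ∘ₗ TensorProduct.map (TensorProduct.map H.D1 LinearMap.id)
          (TensorProduct.map H.D1 LinearMap.id) := by
  apply TensorProduct.ext_fourfold'
  intro a b c d
  simp

lemma natB :
    TensorProduct.map (LinearMap.id : (A (1:G) ⊗[k] A (1:G)) →ₗ[k] (A (1:G) ⊗[k] A (1:G)))
        (TensorProduct.map H.D1 H.D1)
      ∘ₗ (TensorProduct.tensorTensorTensorComm k (A (1:G)) (A (1:G)) (A (1:G)) (A (1:G))).toLinearMap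
    = (TensorProduct.tensorTensorTensorComm k (A (1:G)) (A (1:G) ⊗[k] A (1:G))
        (A (1:G)) (A (1:G) ⊗[k] A (1:G))).toLinearMap
      ∘ₗ TensorProduct.map (TensorProduct.map LinearMap.id H.D1)
          (TensorProduct.map LinearMap.id H.D1) := by
  apply TensorProduct.ext_fourfold'
  intro a b c d
  simp

lemma COA_symm (x : A (1:G)) :
    (TensorProduct.map H.D1 LinearMap.id) (H.D1 x)
      = (TensorProduct.assoc k (A (1:G)) (A (1:G)) (A (1:G))).symm
          ((TensorProduct.map LinearMap.id H.D1) (H.D1 x)) := by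
  rw [← H.COA x, LinearEquiv.symm_apply_apply]


lemma SHUF_el (t u : A (1:G) ⊗[k] (A (1:G) ⊗[k] A (1:G))) :
    (TensorProduct.assoc k (A (1:G) ⊗[k] A (1:G)) (A (1:G) ⊗[k] A (1:G))
        (A (1:G) ⊗[k] A (1:G)))
      (TensorProduct.map
        (TensorProduct.tensorTensorTensorComm k (A (1:G)) (A (1:G)) (A (1:G))
            (A (1:G))).toLinearMap LinearMap.id
        ((TensorProduct.tensorTensorTensorComm k (A (1:G) ⊗[k] A (1:G)) (A (1:G))
            (A (1:G) ⊗[k] A (1:G)) (A (1:G)))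
          (((TensorProduct.assoc k (A (1:G)) (A (1:G)) (A (1:G))).symm t) ⊗ₜ
            ((TensorProduct.assoc k (A (1:G)) (A (1:G)) (A (1:G))).symm u))))
    = TensorProduct.map LinearMap.id
        (TensorProduct.tensorTensorTensorComm k (A (1:G)) (A (1:G)) (A (1:G))
            (A (1:G))).toLinearMap
        ((TensorProduct.tensorTensorTensorComm k (A (1:G)) (A (1:G) ⊗[k] A (1:G)) (A (1:G))
            (A (1:G) ⊗[k] A (1:G))) (t ⊗ₜ u)) := by
  induction t using TensorProduct.induction_on with
  | zero => simp
  | add t1 t2 h1 h2 => simp only [add_tmul, map_add, tmul_add, h1, h2]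
  | tmul t1 t23 =>
    induction t23 using TensorProduct.induction_on with
    | zero => simp
    | add r1 r2 h1 h2 =>
      simp only [tmul_add, add_tmul, map_add, h1, h2]
    | tmul t2 t3 =>
      induction u using TensorProduct.induction_on with
      | zero => simp
      | add u1 u2 h1 h2 => simp only [tmul_add, map_add, h1, h2]
      | tmul u1 u23 =>
        induction u23 using TensorProduct.induction_on with
        | zero => simp
        | add r1 r2 h1 h2 => simp only [tmul_add, map_add, h1, h2]
        | tmul u2 u3 =>
          simp only [TensorProduct.assoc_symm_tmul, TensorProduct.tensorTensorTensorComm_tmul,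
            TensorProduct.map_tmul, LinearMap.id_apply, LinearEquiv.coe_coe,
            TensorProduct.assoc_tmul]

lemma Delta2_split :
    TensorProduct.map H.Delta2
        (LinearMap.id : (A (1:G) ⊗[k] A (1:G)) →ₗ[k] (A (1:G) ⊗[k] A (1:G)))
      = TensorProduct.map
          (TensorProduct.tensorTensorTensorComm k (A (1:G)) (A (1:G)) (A (1:G))
            (A (1:G))).toLinearMap LinearMap.id
        ∘ₗ TensorProduct.map (TensorProduct.map H.D1 H.D1) LinearMap.id := by
  rw [← TensorProduct.map_comp]; rfl

lemma Delta2_split' :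
    TensorProduct.map
        (LinearMap.id : (A (1:G) ⊗[k] A (1:G)) →ₗ[k] (A (1:G) ⊗[k] A (1:G))) H.Delta2
      = TensorProduct.map LinearMap.id
          (TensorProduct.tensorTensorTensorComm k (A (1:G)) (A (1:G)) (A (1:G))
            (A (1:G))).toLinearMap
        ∘ₗ TensorProduct.map LinearMap.id (TensorProduct.map H.D1 H.D1) := by
  rw [← TensorProduct.map_comp]; rfl

lemma Delta2_coassoc :
    (TensorProduct.assoc k (A (1:G) ⊗[k] A (1:G)) (A (1:G) ⊗[k] A (1:G))
        (A (1:G) ⊗[k] A (1:G))).toLinearMap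
      ∘ₗ TensorProduct.map H.Delta2 LinearMap.id ∘ₗ H.Delta2
    = TensorProduct.map LinearMap.id H.Delta2 ∘ₗ H.Delta2 := by
  apply TensorProduct.ext'
  intro a b
  have hD : H.Delta2 (a ⊗ₜ[k] b)
      = (TensorProduct.tensorTensorTensorComm k (A (1:G)) (A (1:G)) (A (1:G)) (A (1:G)))
          (H.D1 a ⊗ₜ[k] H.D1 b) := by
    simp [Delta2]
  have h1 := LinearMap.congr_fun H.natA (H.D1 a ⊗ₜ[k] H.D1 b)
  have h2 := LinearMap.congr_fun H.natB (H.D1 a ⊗ₜ[k] H.D1 b)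
  simp only [LinearMap.comp_apply, LinearEquiv.coe_coe, TensorProduct.map_tmul] at h1 h2 ⊢
  rw [hD, Delta2_split, Delta2_split']
  simp only [LinearMap.comp_apply, LinearEquiv.coe_coe]
  rw [h1, h2]
  rw [H.COA_symm a, H.COA_symm b]
  exact SHUF_el _ _


lemma conv_assoc (Fm Gm Km : (A (1:G) ⊗[k] A (1:G)) →ₗ[k] A (1:G)) :
    H.conv (H.conv Fm Gm) Km = H.conv Fm (H.conv Gm Km) := by
  have d1 : TensorProduct.map
        (LinearMap.mul' k (A 1) ∘ₗ TensorProduct.map Fm Gm ∘ₗ H.Delta2) Km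
      = TensorProduct.map (LinearMap.mul' k (A 1)) LinearMap.id
        ∘ₗ TensorProduct.map (TensorProduct.map Fm Gm) Km
        ∘ₗ TensorProduct.map H.Delta2 LinearMap.id := by
    rw [← TensorProduct.map_comp, ← TensorProduct.map_comp]; rfl
  have d2 : TensorProduct.map Fm
        (LinearMap.mul' k (A 1) ∘ₗ TensorProduct.map Gm Km ∘ₗ H.Delta2)
      = TensorProduct.map LinearMap.id (LinearMap.mul' k (A 1))
        ∘ₗ TensorProduct.map Fm (TensorProduct.map Gm Km)
        ∘ₗ TensorProduct.map LinearMap.id H.Delta2 := by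
    rw [← TensorProduct.map_comp, ← TensorProduct.map_comp]; rfl
  apply LinearMap.ext; intro t
  have hmu := LinearMap.congr_fun mu_assoc
    ((TensorProduct.map (TensorProduct.map Fm Gm) Km)
      ((TensorProduct.map H.Delta2 LinearMap.id) (H.Delta2 t)))
  have hnat := LinearMap.congr_fun (TensorProduct.map_map_comp_assoc_eq Fm Gm Km).symm
    ((TensorProduct.map H.Delta2 LinearMap.id) (H.Delta2 t))
  have hco := LinearMap.congr_fun H.Delta2_coassoc t
  simp only [LinearMap.comp_apply, LinearEquiv.coe_coe] at hmu hnat hco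
  simp only [conv, LinearMap.comp_apply]
  rw [d1, d2]
  simp only [LinearMap.comp_apply]
  rw [hmu, hnat, hco]

lemma uu_eq : H.uu = Algebra.linearMap k (A (1:G)) ∘ₗ H.epsV := by
  apply LinearMap.ext; intro t
  simp only [uu, LinearMap.smulRight_apply, LinearMap.comp_apply, Algebra.linearMap_apply,
    Algebra.algebraMap_eq_smul_one]

lemma MR : LinearMap.mul' k (A 1) ∘ₗ
    TensorProduct.map LinearMap.id (Algebra.linearMap k (A (1:G)))
    = (TensorProduct.rid k (A (1:G))).toLinearMap := by
  apply TensorProduct.ext'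
  intro x c
  simp only [LinearMap.comp_apply, TensorProduct.map_tmul, LinearMap.id_apply,
    Algebra.linearMap_apply, LinearMap.mul'_apply, LinearEquiv.coe_coe,
    TensorProduct.rid_tmul]
  rw [Algebra.smul_def, Algebra.commutes]

lemma ML : LinearMap.mul' k (A 1) ∘ₗ
    TensorProduct.map (Algebra.linearMap k (A (1:G))) LinearMap.id
    = (TensorProduct.lid k (A (1:G))).toLinearMap := by
  apply TensorProduct.ext'
  intro c x
  simp only [LinearMap.comp_apply, TensorProduct.map_tmul, LinearMap.id_apply,
    Algebra.linearMap_apply, LinearMap.mul'_apply, LinearEquiv.coe_coe,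
    TensorProduct.lid_tmul]
  rw [Algebra.smul_def]

lemma rid_nat (Fm : (A (1:G) ⊗[k] A (1:G)) →ₗ[k] A (1:G)) :
    (TensorProduct.rid k (A (1:G))).toLinearMap ∘ₗ TensorProduct.map Fm (LinearMap.id : k →ₗ[k] k)
    = Fm ∘ₗ (TensorProduct.rid k (A (1:G) ⊗[k] A (1:G))).toLinearMap := by
  apply TensorProduct.ext'
  intro t c
  simp

lemma lid_nat (Fm : (A (1:G) ⊗[k] A (1:G)) →ₗ[k] A (1:G)) :
    (TensorProduct.lid k (A (1:G))).toLinearMap ∘ₗ TensorProduct.map (LinearMap.id : k →ₗ[k] k) Fm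
    = Fm ∘ₗ (TensorProduct.lid k (A (1:G) ⊗[k] A (1:G))).toLinearMap := by
  apply TensorProduct.ext'
  intro c t
  simp

lemma SL1 :
    (TensorProduct.rid k (A (1:G) ⊗[k] A (1:G))).toLinearMap
      ∘ₗ TensorProduct.map LinearMap.id H.epsV
      ∘ₗ (TensorProduct.tensorTensorTensorComm k (A (1:G)) (A (1:G)) (A (1:G))
          (A (1:G))).toLinearMap
    = TensorProduct.map
        ((TensorProduct.rid k (A (1:G))).toLinearMap
          ∘ₗ TensorProduct.map LinearMap.id H.ε.toLinearMap)
        ((TensorProduct.rid k (A (1:G))).toLinearMap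
          ∘ₗ TensorProduct.map LinearMap.id H.ε.toLinearMap) := by
  apply TensorProduct.ext_fourfold'
  intro a b c d
  simp only [LinearMap.comp_apply, LinearEquiv.coe_coe, TensorProduct.tensorTensorTensorComm_tmul,
    TensorProduct.map_tmul, LinearMap.id_apply, TensorProduct.rid_tmul, epsV,
    LinearMap.mul'_apply, AlgHom.toLinearMap_apply]
  simp only [TensorProduct.tmul_smul, ← TensorProduct.smul_tmul', smul_smul]
  rw [mul_comm]

lemma SL2 :
    (TensorProduct.lid k (A (1:G) ⊗[k] A (1:G))).toLinearMap
      ∘ₗ TensorProduct.map H.epsV LinearMap.id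
      ∘ₗ (TensorProduct.tensorTensorTensorComm k (A (1:G)) (A (1:G)) (A (1:G))
          (A (1:G))).toLinearMap
    = TensorProduct.map
        ((TensorProduct.lid k (A (1:G))).toLinearMap
          ∘ₗ TensorProduct.map H.ε.toLinearMap LinearMap.id)
        ((TensorProduct.lid k (A (1:G))).toLinearMap
          ∘ₗ TensorProduct.map H.ε.toLinearMap LinearMap.id) := by
  apply TensorProduct.ext_fourfold'
  intro a b c d
  simp only [LinearMap.comp_apply, LinearEquiv.coe_coe, TensorProduct.tensorTensorTensorComm_tmul,
    TensorProduct.map_tmul, LinearMap.id_apply, TensorProduct.lid_tmul, epsV,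
    LinearMap.mul'_apply, AlgHom.toLinearMap_apply]
  simp only [TensorProduct.tmul_smul, ← TensorProduct.smul_tmul', smul_smul]
  rw [mul_comm]

lemma CR_comp :
    ((TensorProduct.rid k (A (1:G))).toLinearMap
      ∘ₗ TensorProduct.map LinearMap.id H.ε.toLinearMap) ∘ₗ H.D1 = LinearMap.id := by
  apply LinearMap.ext; intro x
  simpa using H.AXR x

lemma CL_comp :
    ((TensorProduct.lid k (A (1:G))).toLinearMap
      ∘ₗ TensorProduct.map H.ε.toLinearMap LinearMap.id) ∘ₗ H.D1 = LinearMap.id := by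
  apply LinearMap.ext; intro x
  simpa using H.AXL x

lemma W_id :
    (TensorProduct.rid k (A (1:G) ⊗[k] A (1:G))).toLinearMap
      ∘ₗ TensorProduct.map LinearMap.id H.epsV ∘ₗ H.Delta2 = LinearMap.id := by
  apply LinearMap.ext; intro t
  have e : H.Delta2 t
      = (TensorProduct.tensorTensorTensorComm k (A (1:G)) (A (1:G)) (A (1:G)) (A (1:G)))
          ((TensorProduct.map H.D1 H.D1) t) := rfl
  have h1 := LinearMap.congr_fun H.SL1 ((TensorProduct.map H.D1 H.D1) t)
  have h2 := LinearMap.congr_fun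
    (TensorProduct.map_comp
      (f₂ := (TensorProduct.rid k (A (1:G))).toLinearMap ∘ₗ TensorProduct.map LinearMap.id H.ε.toLinearMap)
      (f₁ := H.D1)
      (g₂ := (TensorProduct.rid k (A (1:G))).toLinearMap ∘ₗ TensorProduct.map LinearMap.id H.ε.toLinearMap)
      (g₁ := H.D1)) t
  simp only [LinearMap.comp_apply, LinearEquiv.coe_coe] at h1 h2
  simp only [LinearMap.comp_apply, LinearEquiv.coe_coe, e, LinearMap.id_apply]
  rw [h1, ← h2, H.CR_comp, TensorProduct.map_id, LinearMap.id_apply]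

lemma W_id' :
    (TensorProduct.lid k (A (1:G) ⊗[k] A (1:G))).toLinearMap
      ∘ₗ TensorProduct.map H.epsV LinearMap.id ∘ₗ H.Delta2 = LinearMap.id := by
  apply LinearMap.ext; intro t
  have e : H.Delta2 t
      = (TensorProduct.tensorTensorTensorComm k (A (1:G)) (A (1:G)) (A (1:G)) (A (1:G)))
          ((TensorProduct.map H.D1 H.D1) t) := rfl
  have h1 := LinearMap.congr_fun H.SL2 ((TensorProduct.map H.D1 H.D1) t)
  have h2 := LinearMap.congr_fun
    (TensorProduct.map_comp
      (f₂ := (TensorProduct.lid k (A (1:G))).toLinearMap ∘ₗ TensorProduct.map H.ε.toLinearMap LinearMap.id)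
      (f₁ := H.D1)
      (g₂ := (TensorProduct.lid k (A (1:G))).toLinearMap ∘ₗ TensorProduct.map H.ε.toLinearMap LinearMap.id)
      (g₁ := H.D1)) t
  simp only [LinearMap.comp_apply, LinearEquiv.coe_coe] at h1 h2
  simp only [LinearMap.comp_apply, LinearEquiv.coe_coe, e, LinearMap.id_apply]
  rw [h1, ← h2, H.CL_comp, TensorProduct.map_id, LinearMap.id_apply]

lemma conv_uR (Fm : (A (1:G) ⊗[k] A (1:G)) →ₗ[k] A (1:G)) : H.conv Fm H.uu = Fm := by
  have d1 : TensorProduct.map Fm H.uu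
      = TensorProduct.map LinearMap.id (Algebra.linearMap k (A (1:G)))
        ∘ₗ TensorProduct.map Fm (LinearMap.id : k →ₗ[k] k)
        ∘ₗ TensorProduct.map LinearMap.id H.epsV := by
    rw [H.uu_eq, ← TensorProduct.map_comp, ← TensorProduct.map_comp]; rfl
  apply LinearMap.ext; intro t
  have hMR := LinearMap.congr_fun MR
    ((TensorProduct.map Fm (LinearMap.id : k →ₗ[k] k))
      ((TensorProduct.map LinearMap.id H.epsV) (H.Delta2 t)))
  have hrn := LinearMap.congr_fun (rid_nat Fm)
    ((TensorProduct.map LinearMap.id H.epsV) (H.Delta2 t))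
  have hW := LinearMap.congr_fun H.W_id t
  simp only [LinearMap.comp_apply, LinearEquiv.coe_coe, LinearMap.id_apply] at hMR hrn hW
  simp only [conv, LinearMap.comp_apply, d1]
  rw [hMR, hrn, hW]

lemma conv_uL (Fm : (A (1:G) ⊗[k] A (1:G)) →ₗ[k] A (1:G)) : H.conv H.uu Fm = Fm := by
  have d1 : TensorProduct.map H.uu Fm
      = TensorProduct.map (Algebra.linearMap k (A (1:G))) LinearMap.id
        ∘ₗ TensorProduct.map (LinearMap.id : k →ₗ[k] k) Fm
        ∘ₗ TensorProduct.map H.epsV LinearMap.id := by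
    rw [H.uu_eq, ← TensorProduct.map_comp, ← TensorProduct.map_comp]; rfl
  apply LinearMap.ext; intro t
  have hML := LinearMap.congr_fun ML
    ((TensorProduct.map (LinearMap.id : k →ₗ[k] k) Fm)
      ((TensorProduct.map H.epsV LinearMap.id) (H.Delta2 t)))
  have hln := LinearMap.congr_fun (lid_nat Fm)
    ((TensorProduct.map H.epsV LinearMap.id) (H.Delta2 t))
  have hW := LinearMap.congr_fun H.W_id' t
  simp only [LinearMap.comp_apply, LinearEquiv.coe_coe, LinearMap.id_apply] at hML hln hW
  simp only [conv, LinearMap.comp_apply, d1]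
  rw [hML, hln, hW]


lemma FM : H.conv (H.sA ∘ₗ LinearMap.mul' k (A 1)) (LinearMap.mul' k (A 1)) = H.uu := by
  have d : TensorProduct.map (H.sA ∘ₗ LinearMap.mul' k (A 1)) (LinearMap.mul' k (A 1))
      = TensorProduct.map H.sA LinearMap.id
        ∘ₗ TensorProduct.map (LinearMap.mul' k (A 1)) (LinearMap.mul' k (A 1)) := by
    rw [← TensorProduct.map_comp]; rfl
  apply LinearMap.ext; intro t
  have hDM := LinearMap.congr_fun H.DM_comp t
  have hSL := LinearMap.congr_fun H.SL_comp (LinearMap.mul' k (A 1) t)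
  have hem := LinearMap.congr_fun H.epsm_mul t
  simp only [LinearMap.comp_apply] at hDM hSL hem
  simp only [conv, LinearMap.comp_apply, d]
  rw [← hDM, hSL, hem]

lemma SR_comp' : (LinearMap.mul' k (A 1) ∘ₗ TensorProduct.map LinearMap.id H.sA) ∘ₗ H.D1
    = H.epsm := by
  rw [LinearMap.comp_assoc]; exact H.SR_comp

noncomputable def sigma :
    ((A (1:G) ⊗[k] A (1:G)) ⊗[k] A (1:G)) →ₗ[k] ((A (1:G) ⊗[k] A (1:G)) ⊗[k] A (1:G)) :=
  (TensorProduct.assoc k (A (1:G)) (A (1:G)) (A (1:G))).symm.toLinearMap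
    ∘ₗ TensorProduct.map LinearMap.id (TensorProduct.comm k (A (1:G)) (A (1:G))).toLinearMap
    ∘ₗ (TensorProduct.assoc k (A (1:G)) (A (1:G)) (A (1:G))).toLinearMap

noncomputable def Jmap : ((A (1:G) ⊗[k] A (1:G)) ⊗[k] A (1:G)) →ₗ[k] A (1:G) :=
  LinearMap.mul' k (A 1)
    ∘ₗ TensorProduct.map (LinearMap.mul' k (A 1)) H.sA ∘ₗ sigma

noncomputable def Gg : (A (1:G) ⊗[k] A (1:G)) →ₗ[k] A (1:G) :=
  LinearMap.mul' k (A 1) ∘ₗ TensorProduct.map H.sA H.sA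
    ∘ₗ (TensorProduct.comm k (A (1:G)) (A (1:G))).toLinearMap

lemma claimC :
    LinearMap.mul' k (A 1) ∘ₗ TensorProduct.map (LinearMap.mul' k (A 1)) H.Gg
      ∘ₗ (TensorProduct.tensorTensorTensorComm k (A (1:G)) (A (1:G)) (A (1:G))
          (A (1:G))).toLinearMap
    = H.Jmap ∘ₗ TensorProduct.map LinearMap.id
        (LinearMap.mul' k (A 1) ∘ₗ TensorProduct.map LinearMap.id H.sA) := by
  apply TensorProduct.ext_fourfold'
  intro a b c d
  simp only [Gg, Jmap, sigma, LinearMap.comp_apply, LinearEquiv.coe_coe,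
    TensorProduct.tensorTensorTensorComm_tmul, TensorProduct.map_tmul, LinearMap.id_apply,
    TensorProduct.comm_tmul, TensorProduct.assoc_tmul, TensorProduct.assoc_symm_tmul,
    LinearMap.mul'_apply]
  simp [mul_assoc]

lemma claimE (t : A (1:G) ⊗[k] A (1:G)) :
    H.Jmap (t ⊗ₜ (1 : A (1:G)))
      = LinearMap.mul' k (A 1) (TensorProduct.map LinearMap.id H.sA t) := by
  induction t using TensorProduct.induction_on with
  | zero => simp
  | add t1 t2 h1 h2 => simp only [TensorProduct.add_tmul, map_add, h1, h2]
  | tmul x y =>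
    simp only [Jmap, sigma, LinearMap.comp_apply, LinearEquiv.coe_coe,
      TensorProduct.map_tmul, LinearMap.id_apply, TensorProduct.comm_tmul,
      TensorProduct.assoc_tmul, TensorProduct.assoc_symm_tmul, LinearMap.mul'_apply,
      mul_one]

lemma claimD : H.Jmap ∘ₗ TensorProduct.map H.D1 H.epsm = H.uu := by
  apply TensorProduct.ext'
  intro a b
  have hSR := LinearMap.congr_fun H.SR_comp a
  simp only [LinearMap.comp_apply] at hSR
  simp only [LinearMap.comp_apply, TensorProduct.map_tmul, epsm_apply,
    TensorProduct.tmul_smul, map_smul, uu, epsV, LinearMap.smulRight_apply,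
    LinearMap.mul'_apply, AlgHom.toLinearMap_apply]
  rw [H.claimE (H.D1 a), hSR, epsm_apply, smul_smul, mul_comm]

lemma MG : H.conv (LinearMap.mul' k (A 1)) H.Gg = H.uu := by
  apply LinearMap.ext; intro t
  have hC := LinearMap.congr_fun H.claimC ((TensorProduct.map H.D1 H.D1) t)
  have hm := LinearMap.congr_fun
    (TensorProduct.map_comp (f₂ := LinearMap.id) (f₁ := H.D1)
      (g₂ := LinearMap.mul' k (A 1) ∘ₗ TensorProduct.map LinearMap.id H.sA) (g₁ := H.D1)) t
  have hD := LinearMap.congr_fun H.claimD t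
  simp only [LinearMap.comp_apply, LinearEquiv.coe_coe] at hC hm hD
  have e : H.Delta2 t
      = (TensorProduct.tensorTensorTensorComm k (A (1:G)) (A (1:G)) (A (1:G)) (A (1:G)))
          ((TensorProduct.map H.D1 H.D1) t) := rfl
  simp only [conv, LinearMap.comp_apply, e]
  rw [hC, ← hm]
  have e2 : TensorProduct.map (LinearMap.id ∘ₗ H.D1)
      ((LinearMap.mul' k (A 1) ∘ₗ TensorProduct.map LinearMap.id H.sA) ∘ₗ H.D1) t
      = TensorProduct.map H.D1 H.epsm t := by
    rw [H.SR_comp']; rfl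
  rw [e2, hD]

lemma FG : H.sA ∘ₗ LinearMap.mul' k (A 1) = H.Gg := by
  calc H.sA ∘ₗ LinearMap.mul' k (A 1)
      = H.conv (H.sA ∘ₗ LinearMap.mul' k (A 1)) H.uu := (H.conv_uR _).symm
    _ = H.conv (H.sA ∘ₗ LinearMap.mul' k (A 1))
          (H.conv (LinearMap.mul' k (A 1)) H.Gg) := by rw [H.MG]
    _ = H.conv (H.conv (H.sA ∘ₗ LinearMap.mul' k (A 1)) (LinearMap.mul' k (A 1))) H.Gg :=
        (H.conv_assoc _ _ _).symm
    _ = H.conv H.uu H.Gg := by rw [H.FM]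
    _ = H.Gg := H.conv_uL _

lemma anti_mul (x y : A (1:G)) : H.sA (x * y) = H.sA y * H.sA x := by
  have h := LinearMap.congr_fun H.FG (x ⊗ₜ[k] y)
  simpa only [Gg, LinearMap.comp_apply, LinearMap.mul'_apply, LinearEquiv.coe_coe,
    TensorProduct.comm_tmul, TensorProduct.map_tmul] using h

lemma sA_one : H.sA (1 : A (1:G)) = 1 := by
  have h := H.SRax 1
  rw [H.D1_one, Algebra.TensorProduct.one_def] at h
  simpa using h


lemma Tmap_def : castL k A (inv_inv (1:G)) ∘ₗ H.S (1:G)⁻¹ ∘ₗ H.S 1 = H.Tmap := rfl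

lemma QopD1 : (H.sA ∘ₗ LinearMap.mul' k (A 1) ∘ₗ TensorProduct.map H.sB LinearMap.id) ∘ₗ H.D1
    = H.epsm := by
  apply LinearMap.ext; intro x
  have h := LinearMap.congr_fun H.SB_comp x
  simp only [LinearMap.comp_apply] at h ⊢
  rw [h, epsm_apply, map_smul, H.sA_one]

end HopfGCoalgebra

lemma trace_eq_sum_basis {M : Type*} [AddCommGroup M] [Module k M] {ι : Type*} [Fintype ι]
    [DecidableEq ι] (b : Module.Basis ι k M) (f : M →ₗ[k] M) :
    LinearMap.trace k M f = ∑ i, b.repr (f (b i)) i := by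
  rw [LinearMap.trace_eq_matrix_trace k b f, Matrix.trace]
  simp [Matrix.diag, LinearMap.toMatrix_apply]

lemma coord_lemA {ι : Type*} (f : A (1:G) →ₗ[k] k) (b : Module.Basis ι k (A (1:G))) (i : ι)
    (t : A (1:G) ⊗[k] A (1:G)) :
    b.repr ((TensorProduct.rid k (A 1)) (TensorProduct.map LinearMap.id f t)) i
      = f ((TensorProduct.lid k (A 1)) (TensorProduct.map (b.coord i) LinearMap.id t)) := by
  induction t using TensorProduct.induction_on with
  | zero => simp
  | add t1 t2 h1 h2 => simp [h1, h2]
  | tmul x y =>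
    simp only [TensorProduct.map_tmul, LinearMap.id_apply, LinearEquiv.coe_coe,
      TensorProduct.rid_tmul, TensorProduct.lid_tmul, map_smul, Module.Basis.coord_apply,
      Finsupp.smul_apply, smul_eq_mul]
    rw [mul_comm]

lemma coord_lemB {ι : Type*} [Fintype ι] [DecidableEq ι] (b : Module.Basis ι k (A (1:G))) (i j : ι)
    (t : A (1:G) ⊗[k] A (1:G)) :
    (b.tensorProduct b).repr t (i, j)
      = b.repr ((TensorProduct.lid k (A 1)) (TensorProduct.map (b.coord i) LinearMap.id t)) j := by
  induction t using TensorProduct.induction_on with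
  | zero => simp
  | add t1 t2 h1 h2 => simp [h1, h2]
  | tmul x y =>
    simp only [Module.Basis.tensorProduct_repr_tmul_apply, TensorProduct.map_tmul,
      LinearMap.id_apply, LinearEquiv.coe_coe, TensorProduct.lid_tmul, map_smul,
      Module.Basis.coord_apply, Finsupp.smul_apply, smul_eq_mul]
    rw [mul_comm]

end Aux


/-- there exists `f ∈ (A e)*` such that the family `(φ_f^p)` is
nonzero, i.e. `φ_f^p ≠ 0` for some `p`. -/
theorem exists_phi_ne_zero
    {k : Type u} [Field k] {G : Type v} [Group G]
    (A : G → Type w) [∀ p, Ring (A p)] [∀ p, Algebra k (A p)]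
    [∀ p, FiniteDimensional k (A p)]
    (H : HopfGCoalgebra k A) :
    ∃ f : A (1 : G) →ₗ[k] k, ∃ p : G, H.phi f p ≠ 0 := by
  by_contra hcon
  push_neg at hcon
  classical
  let b := Module.finBasis k (A (1:G))
  let Z : A (1:G) → A (1:G) := fun a =>
    ∑ i, (TensorProduct.lid k (A 1)) (TensorProduct.map (b.coord i) LinearMap.id
      (H.D1 (a * H.Tmap (b i))))
  have hphi : ∀ (f : A (1:G) →ₗ[k] k) (a : A (1:G)), H.phi f 1 a = f (Z a) := by
    intro f a
    simp only [HopfGCoalgebra.phi, LinearMap.comp_apply, LinearMap.llcomp_apply',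
      LinearMap.lcomp_apply']
    rw [H.Tmap_def, trace_eq_sum_basis b]
    simp only [LinearMap.comp_apply, LinearMap.mul_apply', AlgHom.toLinearMap_apply]
    refine Eq.trans (Finset.sum_congr rfl fun i _ => coord_lemA f b i _) ?_
    rw [← map_sum]
    rfl
  have hZ : ∀ a, Z a = 0 := by
    intro a
    refine (Module.forall_dual_apply_eq_zero_iff k (Z a)).mp ?_
    intro f
    rw [← hphi f a, hcon f 1]
    rfl
  have key : LinearMap.trace k (A (1:G) ⊗[k] A (1:G))
      (H.D1 ∘ₗ (H.sA ∘ₗ LinearMap.mul' k (A 1) ∘ₗ TensorProduct.map H.sB LinearMap.id)) = 1 := by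
    rw [LinearMap.trace_comp_comm', H.QopD1, trace_eq_sum_basis b]
    simp only [HopfGCoalgebra.epsm_apply, map_smul, Finsupp.smul_apply, smul_eq_mul]
    rw [Finset.sum_congr rfl (fun i _ => mul_comm (H.ε (b i)) (b.repr 1 i))]
    have h1e := congrArg H.ε (b.sum_repr 1)
    rw [map_sum] at h1e
    simp only [map_smul, smul_eq_mul, map_one] at h1e
    rw [h1e]
  have h1 : ∀ i j, b.coord j ((TensorProduct.lid k (A 1))
        (TensorProduct.map (b.coord i) LinearMap.id (H.D1 (H.sA (b j) * H.Tmap (b i)))))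
      = (b.tensorProduct b).repr
          ((H.D1 ∘ₗ (H.sA ∘ₗ LinearMap.mul' k (A 1) ∘ₗ TensorProduct.map H.sB LinearMap.id))
            ((b.tensorProduct b) (i, j))) (i, j) := by
    intro i j
    rw [Module.Basis.tensorProduct_apply', coord_lemB b i j]
    simp only [LinearMap.comp_apply, TensorProduct.map_tmul, LinearMap.id_apply,
      LinearMap.mul'_apply, Module.Basis.coord_apply]
    rw [H.Tmap_eq, H.anti_mul]
  have h2 : (0:k) = LinearMap.trace k (A (1:G) ⊗[k] A (1:G))
      (H.D1 ∘ₗ (H.sA ∘ₗ LinearMap.mul' k (A 1) ∘ₗ TensorProduct.map H.sB LinearMap.id)) := by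
    calc (0:k) = ∑ j, b.coord j (Z (H.sA (b j))) := by simp [hZ]
      _ = ∑ j, ∑ i, b.coord j ((TensorProduct.lid k (A 1))
            (TensorProduct.map (b.coord i) LinearMap.id
              (H.D1 (H.sA (b j) * H.Tmap (b i))))) := by
          refine Finset.sum_congr rfl (fun j _ => ?_)
          simp only [Z, map_sum]
      _ = ∑ j, ∑ i, (b.tensorProduct b).repr
            ((H.D1 ∘ₗ (H.sA ∘ₗ LinearMap.mul' k (A 1)
              ∘ₗ TensorProduct.map H.sB LinearMap.id))
              ((b.tensorProduct b) (i, j))) (i, j) := by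
          exact Finset.sum_congr rfl (fun j _ => Finset.sum_congr rfl (fun i _ => h1 i j))
      _ = ∑ i, ∑ j, (b.tensorProduct b).repr
            ((H.D1 ∘ₗ (H.sA ∘ₗ LinearMap.mul' k (A 1)
              ∘ₗ TensorProduct.map H.sB LinearMap.id))
              ((b.tensorProduct b) (i, j))) (i, j) := Finset.sum_comm
      _ = ∑ p : _ × _, (b.tensorProduct b).repr
            ((H.D1 ∘ₗ (H.sA ∘ₗ LinearMap.mul' k (A 1)
              ∘ₗ TensorProduct.map H.sB LinearMap.id))
              ((b.tensorProduct b) p)) p := by rw [Fintype.sum_prod_type]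
      _ = _ := (trace_eq_sum_basis (b.tensorProduct b) _).symm
  rw [key] at h2
  exact zero_ne_one h2
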